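/- Let β ≥ 1 be an integer and let α₀ > α₁ > ⋯ > α_p ≥ 1 be strictly decreasing positive integers such that gcd(α₀, α₁, …, α_p, β) = 1. For 0 ≤ k ≤ p set g_k = gcd(α₀, …, α_k, β) and g₋₁ = β. Then the integer (g₋₁ − g₀)·α₀ + (g₀ − g₁)·α₁ + ⋯ + (g_{p−1} − g_p)·α_p − β² + 1 is even. -/
import Mathlib


/-- The sequence of successive gcds: `gseq α β 0 = β` (this is `g₋₁`) and
`gseq α β (k+1) = gcd (α k) (gseq α β k)`, so that `gseq α β (k+1) = gcd (α₀, …, α_k, β)`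
(this is `g_k`). -/
def gseq (α : ℕ → ℕ) (β : ℕ) : ℕ → ℕ
  | 0 => β
  | k + 1 => Nat.gcd (α k) (gseq α β k)

lemma even_cast_zmod2 {n : ℕ} (h : Even n) : (n : ZMod 2) = 0 := by
  exact (ZMod.natCast_eq_zero_iff n 2).mpr (even_iff_two_dvd.mp h)

lemma odd_cast_zmod2 {n : ℕ} (h : Odd n) : (n : ZMod 2) = 1 := by
  obtain ⟨k, hk⟩ := h
  subst hk
  push_cast
  have h2 : (2 : ZMod 2) = 0 := by decide
  rw [h2]; ring

lemma key (a c : ℕ) :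
    ((a : ZMod 2) - (Nat.gcd c a : ZMod 2)) * (c : ZMod 2)
      = (a : ZMod 2) - (Nat.gcd c a : ZMod 2) := by
  rcases Nat.even_or_odd c with hc | hc
  · have hc0 : (c : ZMod 2) = 0 := even_cast_zmod2 hc
    have hga : (Nat.gcd c a : ZMod 2) = (a : ZMod 2) := by
      rcases Nat.even_or_odd a with ha | ha
      · rw [even_cast_zmod2 ha, even_cast_zmod2 (even_iff_two_dvd.mpr
          (Nat.dvd_gcd (even_iff_two_dvd.mp hc) (even_iff_two_dvd.mp ha)))]
      · have hgo : Odd (Nat.gcd c a) := by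
          rcases Nat.even_or_odd (Nat.gcd c a) with h | h
          · exact absurd (even_iff_two_dvd.mpr
              ((even_iff_two_dvd.mp h).trans (Nat.gcd_dvd_right c a)))
              (Nat.not_even_iff_odd.mpr ha)
          · exact h
        rw [odd_cast_zmod2 hgo, odd_cast_zmod2 ha]
    rw [hga, hc0]; ring
  · rw [odd_cast_zmod2 hc, mul_one]

/-- For `β ≥ 1` and strictly decreasing positive integers
`α₀ > α₁ > ⋯ > α_p ≥ 1` with `gcd(α₀, …, α_p, β) = 1`, the integer
`(g₋₁ − g₀)·α₀ + (g₀ − g₁)·α₁ + ⋯ + (g_{p−1} − g_p)·α_p − β² + 1` is even. -/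
theorem numberOfLoops_even (p : ℕ) (α : ℕ → ℕ) (β : ℕ)
    (hβ : 1 ≤ β)
    (hdec : ∀ i, i < p → α (i + 1) < α i)
    (hpos : 1 ≤ α p)
    (hgcd : gseq α β (p + 1) = 1) :
    Even ((∑ k ∈ Finset.range (p + 1),
        ((gseq α β k : ℤ) - (gseq α β (k + 1) : ℤ)) * (α k : ℤ))
      - (β : ℤ) ^ 2 + 1) := by
  have h0 : (((∑ k ∈ Finset.range (p + 1),
        ((gseq α β k : ℤ) - (gseq α β (k + 1) : ℤ)) * (α k : ℤ))
      - (β : ℤ) ^ 2 + 1 : ℤ) : ZMod 2) = 0 := ?_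
  · rw [even_iff_two_dvd]
    exact_mod_cast (ZMod.intCast_zmod_eq_zero_iff_dvd _ 2).mp h0
  push_cast
  have hterm : ∀ k, ((gseq α β k : ZMod 2) - (gseq α β (k + 1) : ZMod 2)) * (α k : ZMod 2)
      = (gseq α β k : ZMod 2) - (gseq α β (k + 1) : ZMod 2) := by
    intro k
    have := key (gseq α β k) (α k)
    simpa [gseq] using this
  rw [Finset.sum_congr rfl (fun k _ => hterm k),
    Finset.sum_range_sub' (fun k => ((gseq α β k : ZMod 2))), hgcd]
  simp only [gseq]
  push_cast
  have hsq : (β : ZMod 2) ^ 2 = (β : ZMod 2) := by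
    rcases Nat.even_or_odd β with h | h
    · rw [even_cast_zmod2 h]; ring
    · rw [odd_cast_zmod2 h]; ring
  rw [hsq]; ring
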